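/- For all matrices A and B in SU(1,1;ℂ), η(A·B) = η(A)·η(B); that is, η is a group homomorphism from SU(1,1;ℂ) into the 3×3 real matrices. -/

import Mathlib

open Matrix

noncomputable section

/-- The matrix `J = diag(1, -1)` in `M₂(ℂ)`. -/
def Jc : Matrix (Fin 2) (Fin 2) ℂ := !![1, 0; 0, -1]

/-- `SU(1,1;ℂ) = {A ∈ M₂(ℂ) : A*JA = J and det A = 1}`. -/
def SU11C : Set (Matrix (Fin 2) (Fin 2) ℂ) := {A | Aᴴ * Jc * A = Jc ∧ A.det = 1}

/-- The double covering map `η : SU(1,1;ℂ) → SO⁺(2,1)`, written with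
`a = A₀₀ = a₁ + a₂ i` and `b = A₀₁ = b₁ + b₂ i`. -/
def eta (A : Matrix (Fin 2) (Fin 2) ℂ) : Matrix (Fin 3) (Fin 3) ℝ :=
  let a1 := (A 0 0).re; let a2 := (A 0 0).im
  let b1 := (A 0 1).re; let b2 := (A 0 1).im
  !![1 - 2*a2^2 + 2*b1^2, -2*a1*a2 + 2*b1*b2, 2*a1*b1 - 2*a2*b2;
     2*a1*a2 + 2*b1*b2, 1 - 2*a2^2 + 2*b2^2, 2*a1*b2 + 2*a2*b1;
     2*a1*b1 + 2*a2*b2, 2*a1*b2 - 2*a2*b1, 1 + 2*b1^2 + 2*b2^2]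

/-!
An element of `SU(1,1;ℂ)` has `A⁻¹ = J Aᴴ J`, and comparing this with the adjugate shows
`A = [[a, b], [b̄, ā]]` with `|a|² - |b|² = 1`. Using that relation, `η(A)` equals a quadratic form
`η̃(a, b)` without constant terms, and `η̃` is multiplicative on matrices of the shape
`[[a, b], [b̄, ā]]` by a polynomial identity, with no condition on `a` and `b`. Since `SU(1,1;ℂ)` is closed under multiplication, the
relation holds for `AB` too.
-/

open ComplexConjugate

/-- `η` with each constant `1` replaced by `|a|² - |b|²`. -/
def etaHom (a b : ℂ) : Matrix (Fin 3) (Fin 3) ℝ :=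
  let a1 := a.re; let a2 := a.im
  let b1 := b.re; let b2 := b.im
  !![a1^2 - a2^2 + b1^2 - b2^2, -2*a1*a2 + 2*b1*b2, 2*a1*b1 - 2*a2*b2;
     2*a1*a2 + 2*b1*b2, a1^2 - a2^2 - b1^2 + b2^2, 2*a1*b2 + 2*a2*b1;
     2*a1*b1 + 2*a2*b2, 2*a1*b2 - 2*a2*b1, a1^2 + a2^2 + b1^2 + b2^2]

/-- The arguments on the left are the first row of `[[a, b], [b̄, ā]] * [[a', b'], [b̄', ā']]`. -/
theorem etaHom_mul (a b a' b' : ℂ) :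
    etaHom (a * a' + b * conj b') (a * b' + b * conj a') = etaHom a b * etaHom a' b' := by
  ext i j
  fin_cases i <;> fin_cases j <;>
    simp [etaHom, Matrix.mul_apply, Fin.sum_univ_succ, Complex.mul_re, Complex.mul_im] <;> ring

theorem eta_eq_etaHom {A : Matrix (Fin 2) (Fin 2) ℂ}
    (h : Complex.normSq (A 0 0) - Complex.normSq (A 0 1) = 1) :
    eta A = etaHom (A 0 0) (A 0 1) := by
  rw [Complex.normSq_apply, Complex.normSq_apply] at h
  ext i j
  fin_cases i <;> fin_cases j <;> simp [eta, etaHom] <;> linear_combination -h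

theorem Jc_mul_Jc : Jc * Jc = 1 := by
  simp [Jc, ← Matrix.one_fin_two]

namespace SU11C

theorem mul_mem {A B : Matrix (Fin 2) (Fin 2) ℂ} (hA : A ∈ SU11C) (hB : B ∈ SU11C) :
    A * B ∈ SU11C := by
  refine ⟨?_, by rw [det_mul, hA.2, hB.2, one_mul]⟩
  calc (A * B)ᴴ * Jc * (A * B) = Bᴴ * (Aᴴ * Jc * A) * B := by
        simp only [conjTranspose_mul, Matrix.mul_assoc]
    _ = Jc := by rw [hA.1, hB.1]

/-- Both sides are the inverse of `A`. -/
theorem adjugate_eq {A : Matrix (Fin 2) (Fin 2) ℂ} (hA : A ∈ SU11C) :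
    adjugate A = Jc * Aᴴ * Jc := by
  have h₁ : adjugate A * A = 1 := by rw [adjugate_mul, hA.2, one_smul]
  have h₂ : Jc * Aᴴ * Jc * A = 1 := by
    rw [Matrix.mul_assoc, Matrix.mul_assoc, ← Matrix.mul_assoc Aᴴ, hA.1, Jc_mul_Jc]
  rw [← inv_eq_left_inv h₁, inv_eq_left_inv h₂]

theorem apply_one_zero {A : Matrix (Fin 2) (Fin 2) ℂ} (hA : A ∈ SU11C) :
    A 1 0 = conj (A 0 1) := by
  simpa [adjugate_fin_two, Jc, mul_apply, vecMul, dotProduct] using congrFun₂ (adjugate_eq hA) 1 0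

theorem apply_one_one {A : Matrix (Fin 2) (Fin 2) ℂ} (hA : A ∈ SU11C) :
    A 1 1 = conj (A 0 0) := by
  simpa [adjugate_fin_two, Jc, mul_apply, vecMul, dotProduct] using congrFun₂ (adjugate_eq hA) 0 0

theorem normSq_sub_normSq {A : Matrix (Fin 2) (Fin 2) ℂ} (hA : A ∈ SU11C) :
    Complex.normSq (A 0 0) - Complex.normSq (A 0 1) = 1 := by
  have h := hA.2
  rw [det_fin_two, apply_one_zero hA, apply_one_one hA, Complex.mul_conj, Complex.mul_conj] at h
  exact_mod_cast h

end SU11C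

theorem stmt16 (A B : Matrix (Fin 2) (Fin 2) ℂ) (hA : A ∈ SU11C) (hB : B ∈ SU11C) :
    eta (A * B) = eta A * eta B := by
  have h00 : (A * B) 0 0 = A 0 0 * B 0 0 + A 0 1 * conj (B 0 1) := by
    simp [mul_apply, Fin.sum_univ_two, SU11C.apply_one_zero hB]
  have h01 : (A * B) 0 1 = A 0 0 * B 0 1 + A 0 1 * conj (B 0 0) := by
    simp [mul_apply, Fin.sum_univ_two, SU11C.apply_one_one hB]
  rw [eta_eq_etaHom (SU11C.normSq_sub_normSq (SU11C.mul_mem hA hB)),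
    eta_eq_etaHom (SU11C.normSq_sub_normSq hA), eta_eq_etaHom (SU11C.normSq_sub_normSq hB),
    h00, h01, etaHom_mul]
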